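/- arXiv:2009.11133 — 3 statements merged into one kernel-verified Lean document; each statement's English description precedes it below -/
import Mathlib

section
/- Weyl's perturbation theorem: let A, B be real symmetric n×n matrices with eigenvalues α_1 ≥ ... ≥ α_n and β_1 ≥ ... ≥ β_n respectively. Then for all i, |α_i − β_i| ≤ ‖A − B‖, where ‖·‖ is the operator 2-norm. -/
open Matrix BigOperators

/-- Operator 2-norm of a real square matrix. -/
noncomputable def opNorm {n : ℕ} (M : Matrix (Fin n) (Fin n) ℝ) : ℝ :=
  ‖Matrix.toEuclideanCLM (𝕜 := ℝ) M‖

/-- Spectral radius of a real square matrix. -/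
noncomputable def specRad {n : ℕ} (M : Matrix (Fin n) (Fin n) ℝ) : ℝ :=
  sSup {r : ℝ | ∃ μ ∈ spectrum ℝ M, r = |μ|}

/-- Off-diagonal (adjacency) part of a matrix. -/
def adjPart {n : ℕ} (M : Matrix (Fin n) (Fin n) ℝ) : Matrix (Fin n) (Fin n) ℝ :=
  Matrix.of fun i j => if i = j then 0 else M i j

/-- Laplacian built from the off-diagonal part of `M`. -/
def lap {n : ℕ} (M : Matrix (Fin n) (Fin n) ℝ) : Matrix (Fin n) (Fin n) ℝ :=
  Matrix.diagonal (fun i => ∑ j, adjPart M i j) - adjPart M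

/-- Maximum absolute row sum (∞-norm). -/
noncomputable def rowSumNorm {n : ℕ} (M : Matrix (Fin n) (Fin n) ℝ) : ℝ :=
  ⨆ i, ∑ j, |M i j|

/-- Maximum absolute column sum (1-norm). -/
noncomputable def colSumNorm {n : ℕ} (M : Matrix (Fin n) (Fin n) ℝ) : ℝ :=
  ⨆ j, ∑ i, |M i j|

/-- `α` lists the eigenvalues of a Hermitian matrix in decreasing order. -/
def IsEigList {n : ℕ} {M : Matrix (Fin n) (Fin n) ℝ} (hM : M.IsHermitian)
    (α : Fin n → ℝ) : Prop :=
  Antitone α ∧ ∃ σ : Equiv.Perm (Fin n), α = hM.eigenvalues ∘ σ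

/-- Loewner order: `B - A` is positive semidefinite. -/
def PSDle {n : ℕ} (A B : Matrix (Fin n) (Fin n) ℝ) : Prop := (B - A).PosSemidef

/-!
Courant–Fischer by a dimension count: the span `U` of the eigenvectors of `A` for `α 0, …, α i`
has dimension `i + 1` and the span `W` of those of `B` for `β i, …, β (n - 1)` has dimension
`n - i`, so they share a nonzero vector `x`. On `U` the Rayleigh quotient of `A` is at least
`α i`, on `W` that of `B` is at most `β i`, hence
`(α i - β i) ‖x‖² ≤ ⟪x, (A - B) x⟫ ≤ ‖A - B‖ ‖x‖²`.
-/

open scoped RealInnerProductSpace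

namespace OrthonormalBasis

variable {ι E : Type*} [Fintype ι] [NormedAddCommGroup E] [InnerProductSpace ℝ E]
  (b : OrthonormalBasis ι ℝ E)

lemma inner_eq_zero_of_mem_span_image {S : Set ι} {x : E} (hx : x ∈ Submodule.span ℝ (b '' S))
    {k : ι} (hk : k ∉ S) : ⟪b k, x⟫ = 0 := by
  have hle : Submodule.span ℝ (b '' S) ≤ (ℝ ∙ b k)ᗮ := by
    rw [Submodule.span_le]
    rintro _ ⟨j, hj, rfl⟩
    exact Submodule.mem_orthogonal_singleton_iff_inner_right.2
      (b.orthonormal.2 fun h => hk (h ▸ hj))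
  exact Submodule.mem_orthogonal_singleton_iff_inner_right.1 (hle hx)

lemma finrank_span_image (S : Finset ι) :
    Module.finrank ℝ (Submodule.span ℝ (b '' S)) = S.card := by
  have hli : LinearIndependent ℝ (fun j : (S : Set ι) => b j) :=
    b.orthonormal.linearIndependent.comp _ Subtype.val_injective
  rw [Set.image_eq_range, finrank_span_eq_card hli]
  simp

variable {b}

lemma inner_map_self_eq_sum {T : E →ₗ[ℝ] E} {lam : ι → ℝ} (hT : ∀ k, T (b k) = lam k • b k)
    (x : E) : ⟪x, T x⟫ = ∑ k, lam k * ⟪b k, x⟫ ^ 2 := by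
  have hTx : T x = ∑ k, (lam k * ⟪b k, x⟫) • b k := by
    conv_lhs => rw [← b.sum_repr' x]
    simp only [map_sum, map_smul, hT, smul_smul, mul_comm]
  rw [hTx, inner_sum]
  refine Finset.sum_congr rfl fun k _ => ?_
  rw [inner_smul_right, real_inner_comm]
  ring

lemma mul_norm_sq_le_inner_map_self {T : E →ₗ[ℝ] E} {lam : ι → ℝ}
    (hT : ∀ k, T (b k) = lam k • b k) {S : Set ι} {c : ℝ} (hc : ∀ k ∈ S, c ≤ lam k) {x : E}
    (hx : x ∈ Submodule.span ℝ (b '' S)) : c * ‖x‖ ^ 2 ≤ ⟪x, T x⟫ := by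
  rw [inner_map_self_eq_sum hT, ← b.sum_sq_inner_right, Finset.mul_sum]
  refine Finset.sum_le_sum fun k _ => ?_
  by_cases hk : k ∈ S
  · exact mul_le_mul_of_nonneg_right (hc k hk) (sq_nonneg _)
  · simp [b.inner_eq_zero_of_mem_span_image hx hk]

lemma inner_map_self_le_mul_norm_sq {T : E →ₗ[ℝ] E} {lam : ι → ℝ}
    (hT : ∀ k, T (b k) = lam k • b k) {S : Set ι} {c : ℝ} (hc : ∀ k ∈ S, lam k ≤ c) {x : E}
    (hx : x ∈ Submodule.span ℝ (b '' S)) : ⟪x, T x⟫ ≤ c * ‖x‖ ^ 2 := by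
  rw [inner_map_self_eq_sum hT, ← b.sum_sq_inner_right, Finset.mul_sum]
  refine Finset.sum_le_sum fun k _ => ?_
  by_cases hk : k ∈ S
  · exact mul_le_mul_of_nonneg_right (hc k hk) (sq_nonneg _)
  · simp [b.inner_eq_zero_of_mem_span_image hx hk]

end OrthonormalBasis

section Weyl

variable {E : Type*} [NormedAddCommGroup E] [InnerProductSpace ℝ E] {n : ℕ}
  {T T' : E →L[ℝ] E} {b b' : OrthonormalBasis (Fin n) ℝ E} {α β : Fin n → ℝ}

theorem sub_le_norm_sub_of_antitone_eigenbases (hα : Antitone α) (hβ : Antitone β)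
    (hT : ∀ k, T (b k) = α k • b k) (hT' : ∀ k, T' (b' k) = β k • b' k) (i : Fin n) :
    α i - β i ≤ ‖T - T'‖ := by
  have : FiniteDimensional ℝ E := b.toBasis.finiteDimensional_of_finite
  set U := Submodule.span ℝ (b '' ↑(Finset.Iic i))
  set W := Submodule.span ℝ (b' '' ↑(Finset.Ici i))
  have hUW : ¬ Disjoint U W := fun h => by
    have hdim := Submodule.finrank_add_finrank_le_of_disjoint h
    rw [b.finrank_span_image, b'.finrank_span_image, Fin.card_Iic, Fin.card_Ici,
      Module.finrank_eq_card_basis b.toBasis, Fintype.card_fin] at hdim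
    omega
  obtain ⟨x, hxU, hxW, hx⟩ : ∃ x ∈ U, x ∈ W ∧ x ≠ 0 := by
    simpa [Submodule.disjoint_def] using hUW
  have hTx : α i * ‖x‖ ^ 2 ≤ ⟪x, T x⟫ :=
    OrthonormalBasis.mul_norm_sq_le_inner_map_self (T := (T : E →ₗ[ℝ] E)) hT
      (fun k hk => hα (Finset.mem_Iic.1 hk)) hxU
  have hT'x : ⟪x, T' x⟫ ≤ β i * ‖x‖ ^ 2 :=
    OrthonormalBasis.inner_map_self_le_mul_norm_sq (T := (T' : E →ₗ[ℝ] E)) hT'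
      (fun k hk => hβ (Finset.mem_Ici.1 hk)) hxW
  have hAB : ⟪x, (T - T') x⟫ ≤ ‖T - T'‖ * ‖x‖ ^ 2 := calc
    ⟪x, (T - T') x⟫ ≤ ‖x‖ * ‖(T - T') x‖ := real_inner_le_norm _ _
    _ ≤ ‖x‖ * (‖T - T'‖ * ‖x‖) := by gcongr; exact (T - T').le_opNorm x
    _ = ‖T - T'‖ * ‖x‖ ^ 2 := by ring
  rw [_root_.sub_apply, inner_sub_right] at hAB
  exact le_of_mul_le_mul_right (by linarith) (by positivity : 0 < ‖x‖ ^ 2)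

theorem abs_sub_le_norm_sub_of_antitone_eigenbases (hα : Antitone α) (hβ : Antitone β)
    (hT : ∀ k, T (b k) = α k • b k) (hT' : ∀ k, T' (b' k) = β k • b' k) (i : Fin n) :
    |α i - β i| ≤ ‖T - T'‖ :=
  abs_sub_le_iff.2 ⟨sub_le_norm_sub_of_antitone_eigenbases hα hβ hT hT' i,
    norm_sub_rev T T' ▸ sub_le_norm_sub_of_antitone_eigenbases hβ hα hT' hT i⟩

end Weyl

lemma Matrix.IsHermitian.toEuclideanCLM_eigenvectorBasis {𝕜 ι : Type*} [RCLike 𝕜] [Fintype ι]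
    [DecidableEq ι] {A : Matrix ι ι 𝕜} (hA : A.IsHermitian) (k : ι) :
    Matrix.toEuclideanCLM (𝕜 := 𝕜) A (hA.eigenvectorBasis k)
      = hA.eigenvalues k • hA.eigenvectorBasis k := by
  apply (WithLp.equiv 2 (ι → 𝕜)).injective
  simpa using hA.mulVec_eigenvectorBasis k

lemma IsEigList.exists_orthonormalBasis {n : ℕ} {A : Matrix (Fin n) (Fin n) ℝ}
    {hA : A.IsHermitian} {α : Fin n → ℝ} (h : IsEigList hA α) :
    ∃ b : OrthonormalBasis (Fin n) ℝ (EuclideanSpace ℝ (Fin n)),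
      ∀ k, Matrix.toEuclideanCLM (𝕜 := ℝ) A (b k) = α k • b k := by
  obtain ⟨-, σ, rfl⟩ := h
  exact ⟨hA.eigenvectorBasis.reindex σ.symm, fun k => by
    simpa using hA.toEuclideanCLM_eigenvectorBasis (σ k)⟩

theorem weyl_perturbation {n : ℕ} (A B : Matrix (Fin n) (Fin n) ℝ)
    (hA : A.IsHermitian) (hB : B.IsHermitian)
    (α β : Fin n → ℝ) (hα : IsEigList hA α) (hβ : IsEigList hB β) :
    ∀ i, |α i - β i| ≤ opNorm (A - B) := by
  intro i
  obtain ⟨bA, hbA⟩ := hα.exists_orthonormalBasis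
  obtain ⟨bB, hbB⟩ := hβ.exists_orthonormalBasis
  rw [opNorm, map_sub]
  exact abs_sub_le_norm_sub_of_antitone_eigenbases hα.1 hβ.1 hbA hbB i
end

section
/- Main theorem: Let M ∈ ℝ^{n×n} be a symmetric matrix with all off-diagonal entries nonnegative, with eigenvalues λ_1 ≥ ... ≥ λ_n. Suppose M̂ = Â + dI where d = (Δ_M + δ_M)/2, Â is symmetric with zero diagonal and nonnegative off-diagonal entries, and the Laplacian L̂ built from Â satisfies (1−ε)L_M ⪯ L̂ ⪯ (1+ε)L_M for some ε > 0 (L_M being the Laplacian built from the off-diagonal part of M). Then the eigenvalues λ̂_1 ≥ ... ≥ λ̂_n of M̂ satisfy |λ_i − λ̂_i| ≤ ε√n·ρ(L_M) + (Δ_M − δ_M)/2 for all i. -/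
open Matrix BigOperators

open Finset

local notation "⟪" x ", " y "⟫" => @inner ℝ _ _ x y

variable {n : ℕ}

lemma parseval (b : OrthonormalBasis (Fin n) ℝ (EuclideanSpace ℝ (Fin n)))
    (x y : EuclideanSpace ℝ (Fin n)) :
    ⟪x, y⟫ = ∑ j, ⟪b j, x⟫ * ⟪b j, y⟫ := by
  conv_lhs => rw [← b.sum_repr' x]
  rw [sum_inner]
  simp only [real_inner_smul_left]

lemma eigrel (A : Matrix (Fin n) (Fin n) ℝ) (hA : A.IsHermitian) (j : Fin n) :
    Matrix.toEuclideanLin A (hA.eigenvectorBasis j) = hA.eigenvalues j • hA.eigenvectorBasis j := by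
  have h := hA.mulVec_eigenvectorBasis j
  apply (WithLp.equiv 2 (Fin n → ℝ)).injective
  simpa [Matrix.toEuclideanLin_apply] using h

lemma inner_T_eig (A : Matrix (Fin n) (Fin n) ℝ) (hA : A.IsHermitian)
    (j : Fin n) (x : EuclideanSpace ℝ (Fin n)) :
    ⟪hA.eigenvectorBasis j, Matrix.toEuclideanLin A x⟫
      = hA.eigenvalues j * ⟪hA.eigenvectorBasis j, x⟫ := by
  have hsym := (Matrix.isHermitian_iff_isSymmetric.mp hA)
  rw [← hsym (hA.eigenvectorBasis j) x, eigrel A hA j, real_inner_smul_left]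

lemma quad_eq (A : Matrix (Fin n) (Fin n) ℝ) (hA : A.IsHermitian) (x : EuclideanSpace ℝ (Fin n)) :
    ⟪x, Matrix.toEuclideanLin A x⟫ = ∑ j, hA.eigenvalues j * ⟪hA.eigenvectorBasis j, x⟫ ^ 2 := by
  rw [parseval hA.eigenvectorBasis]
  refine Finset.sum_congr rfl fun j _ => ?_
  rw [inner_T_eig]; ring

lemma normsq_eq (b : OrthonormalBasis (Fin n) ℝ (EuclideanSpace ℝ (Fin n)))
    (x : EuclideanSpace ℝ (Fin n)) : ‖x‖ ^ 2 = ∑ j, ⟪b j, x⟫ ^ 2 := by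
  rw [← real_inner_self_eq_norm_sq, parseval b]
  exact Finset.sum_congr rfl fun j _ => (sq _).symm

lemma normTsq_eq (A : Matrix (Fin n) (Fin n) ℝ) (hA : A.IsHermitian)
    (x : EuclideanSpace ℝ (Fin n)) :
    ‖Matrix.toEuclideanLin A x‖ ^ 2 = ∑ j, hA.eigenvalues j ^ 2 * ⟪hA.eigenvectorBasis j, x⟫ ^ 2 := by
  rw [normsq_eq hA.eigenvectorBasis]
  refine Finset.sum_congr rfl fun j _ => ?_
  rw [inner_T_eig]; ring


variable {n : ℕ}

lemma clm_eq_lin (A : Matrix (Fin n) (Fin n) ℝ) (x : EuclideanSpace ℝ (Fin n)) :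
    Matrix.toEuclideanCLM (𝕜 := ℝ) A x = Matrix.toEuclideanLin A x := by
  rw [← Matrix.coe_toEuclideanCLM_eq_toEuclideanLin]; rfl

lemma enorm_sq (x : EuclideanSpace ℝ (Fin n)) : ‖x‖ ^ 2 = ∑ i, x i ^ 2 := by
  rw [← real_inner_self_eq_norm_sq]
  simp only [PiLp.inner_apply, RCLike.inner_apply, conj_trivial]
  exact Finset.sum_congr rfl fun i _ => by ring

lemma elin_apply (S : Matrix (Fin n) (Fin n) ℝ) (x : EuclideanSpace ℝ (Fin n)) (i : Fin n) :
    Matrix.toEuclideanLin S x i = ∑ j, S i j * x j := by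
  rw [Matrix.toEuclideanLin_apply]
  rfl

lemma norm_le_of_sq_le {a b : ℝ} (hb : 0 ≤ b) (ha : 0 ≤ a) (h : a ^ 2 ≤ b ^ 2) : a ≤ b := by
  nlinarith

lemma opNorm_le_bound' (S : Matrix (Fin n) (Fin n) ℝ) (r : ℝ) (hr : 0 ≤ r)
    (h : ∀ x : EuclideanSpace ℝ (Fin n), ‖Matrix.toEuclideanLin S x‖ ≤ r * ‖x‖) :
    opNorm S ≤ r := by
  apply ContinuousLinearMap.opNorm_le_bound _ hr
  intro x
  rw [clm_eq_lin]
  exact h x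

lemma inner_quad_abs_le (A : Matrix (Fin n) (Fin n) ℝ) (x : EuclideanSpace ℝ (Fin n)) :
    |⟪x, Matrix.toEuclideanLin A x⟫| ≤ opNorm A * ‖x‖ ^ 2 := by
  calc |⟪x, Matrix.toEuclideanLin A x⟫| ≤ ‖x‖ * ‖Matrix.toEuclideanLin A x‖ :=
        abs_real_inner_le_norm _ _
    _ ≤ ‖x‖ * (opNorm A * ‖x‖) := by
        refine mul_le_mul_of_nonneg_left ?_ (norm_nonneg _)
        rw [← clm_eq_lin]
        exact ContinuousLinearMap.le_opNorm _ _
    _ = opNorm A * ‖x‖ ^ 2 := by ring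

lemma opNorm_le_of_eig (A : Matrix (Fin n) (Fin n) ℝ) (hA : A.IsHermitian) (c : ℝ) (hc : 0 ≤ c)
    (h : ∀ j, |hA.eigenvalues j| ≤ c) : opNorm A ≤ c := by
  apply opNorm_le_bound' A c hc
  intro x
  apply norm_le_of_sq_le (by positivity) (norm_nonneg _)
  rw [mul_pow, normTsq_eq A hA, normsq_eq hA.eigenvectorBasis x, Finset.mul_sum]
  refine Finset.sum_le_sum fun j _ => ?_
  have h1 : hA.eigenvalues j ^ 2 ≤ c ^ 2 := by
    have := h j; nlinarith [abs_nonneg (hA.eigenvalues j), sq_abs (hA.eigenvalues j)]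
  nlinarith [sq_nonneg (⟪hA.eigenvectorBasis j, x⟫)]

lemma opNorm_le_rowsum (S : Matrix (Fin n) (Fin n) ℝ) (hS : S.IsHermitian) (r : ℝ) (hr : 0 ≤ r)
    (h : ∀ i, ∑ j, |S i j| ≤ r) : opNorm S ≤ r := by
  apply opNorm_le_bound' S r hr
  intro x
  apply norm_le_of_sq_le (by positivity) (norm_nonneg _)
  rw [mul_pow, enorm_sq, enorm_sq x]
  have step1 : ∀ i, (∑ j, S i j * x j) ^ 2 ≤ r * ∑ j, |S i j| * x j ^ 2 := by
    intro i
    have cs : (∑ j, Real.sqrt |S i j| * (Real.sqrt |S i j| * |x j|)) ^ 2 ≤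
        (∑ j, Real.sqrt |S i j| ^ 2) * (∑ j, (Real.sqrt |S i j| * |x j|) ^ 2) :=
      Finset.sum_mul_sq_le_sq_mul_sq _ _ _
    have e1 : ∀ j, Real.sqrt |S i j| * (Real.sqrt |S i j| * |x j|) = |S i j * x j| := by
      intro j
      rw [← mul_assoc, Real.mul_self_sqrt (abs_nonneg _), abs_mul]
    have e2 : ∀ j, Real.sqrt |S i j| ^ 2 = |S i j| := fun j => Real.sq_sqrt (abs_nonneg _)
    have e3 : ∀ j, (Real.sqrt |S i j| * |x j|) ^ 2 = |S i j| * x j ^ 2 := by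
      intro j; rw [mul_pow, e2, sq_abs]
    simp only [e1, e2, e3] at cs
    calc (∑ j, S i j * x j) ^ 2 ≤ (∑ j, |S i j * x j|) ^ 2 := by
          have h1 : |∑ j, S i j * x j| ≤ ∑ j, |S i j * x j| := Finset.abs_sum_le_sum_abs _ _
          nlinarith [abs_nonneg (∑ j, S i j * x j), sq_abs (∑ j, S i j * x j),
            Finset.sum_nonneg (fun j (_ : j ∈ Finset.univ) => abs_nonneg (S i j * x j))]
      _ ≤ (∑ j, |S i j|) * (∑ j, |S i j| * x j ^ 2) := cs
      _ ≤ r * ∑ j, |S i j| * x j ^ 2 := by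
          refine mul_le_mul_of_nonneg_right (h i) ?_
          exact Finset.sum_nonneg fun j _ => mul_nonneg (abs_nonneg _) (sq_nonneg _)
  calc ∑ i, Matrix.toEuclideanLin S x i ^ 2 = ∑ i, (∑ j, S i j * x j) ^ 2 := by
        refine Finset.sum_congr rfl fun i _ => ?_; rw [elin_apply]
    _ ≤ ∑ i, r * ∑ j, |S i j| * x j ^ 2 := Finset.sum_le_sum fun i _ => step1 i
    _ = r * ∑ j, (∑ i, |S i j|) * x j ^ 2 := by
        rw [← Finset.mul_sum, Finset.sum_comm]
        congr 1
        exact Finset.sum_congr rfl fun j _ => by rw [Finset.sum_mul]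
    _ ≤ r * ∑ j, r * x j ^ 2 := by
        refine mul_le_mul_of_nonneg_left (Finset.sum_le_sum fun j _ => ?_) hr
        refine mul_le_mul_of_nonneg_right ?_ (sq_nonneg _)
        calc ∑ i, |S i j| = ∑ i, |S j i| := by
              refine Finset.sum_congr rfl fun i _ => ?_
              have := congrFun (congrFun hS.symm j) i
              simp only [conjTranspose_apply, star_trivial] at this
              rw [this]
          _ ≤ r := h j
    _ = r ^ 2 * ∑ j, x j ^ 2 := by rw [← Finset.mul_sum]; ring


lemma inner_basis_eq_zero (b : OrthonormalBasis (Fin n) ℝ (EuclideanSpace ℝ (Fin n)))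
    (S : Set (Fin n)) {j : Fin n} (hj : j ∉ S) {x : EuclideanSpace ℝ (Fin n)}
    (hx : x ∈ Submodule.span ℝ (b '' S)) : ⟪b j, x⟫ = 0 := by
  have hle : Submodule.span ℝ (b '' S) ≤ (ℝ ∙ b j)ᗮ := by
    rw [Submodule.span_le]
    rintro y ⟨k, hk, rfl⟩
    rw [SetLike.mem_coe, Submodule.mem_orthogonal_singleton_iff_inner_right]
    exact b.orthonormal.2 (fun h => hj (h ▸ hk))
  exact Submodule.mem_orthogonal_singleton_iff_inner_right.mp (hle hx)

lemma quad_ge_on_span (A : Matrix (Fin n) (Fin n) ℝ) (hA : A.IsHermitian)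
    (S : Set (Fin n)) (c : ℝ) (hc : ∀ j ∈ S, c ≤ hA.eigenvalues j)
    (x : EuclideanSpace ℝ (Fin n)) (hx : x ∈ Submodule.span ℝ (hA.eigenvectorBasis '' S)) :
    c * ‖x‖ ^ 2 ≤ ⟪x, Matrix.toEuclideanLin A x⟫ := by
  rw [quad_eq A hA, normsq_eq hA.eigenvectorBasis x, Finset.mul_sum]
  refine Finset.sum_le_sum fun j _ => ?_
  by_cases hj : j ∈ S
  · exact mul_le_mul_of_nonneg_right (hc j hj) (sq_nonneg _)
  · rw [inner_basis_eq_zero hA.eigenvectorBasis S hj hx]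
    simp

lemma quad_le_on_span (A : Matrix (Fin n) (Fin n) ℝ) (hA : A.IsHermitian)
    (S : Set (Fin n)) (c : ℝ) (hc : ∀ j ∈ S, hA.eigenvalues j ≤ c)
    (x : EuclideanSpace ℝ (Fin n)) (hx : x ∈ Submodule.span ℝ (hA.eigenvectorBasis '' S)) :
    ⟪x, Matrix.toEuclideanLin A x⟫ ≤ c * ‖x‖ ^ 2 := by
  rw [quad_eq A hA, normsq_eq hA.eigenvectorBasis x, Finset.mul_sum]
  refine Finset.sum_le_sum fun j _ => ?_
  by_cases hj : j ∈ S
  · exact mul_le_mul_of_nonneg_right (hc j hj) (sq_nonneg _)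
  · rw [inner_basis_eq_zero hA.eigenvectorBasis S hj hx]
    simp

lemma weyl_one (A B : Matrix (Fin n) (Fin n) ℝ) (hA : A.IsHermitian) (hB : B.IsHermitian)
    (α β : Fin n → ℝ) (ha : IsEigList hA α) (hb : IsEigList hB β) (i : Fin n) :
    α i ≤ β i + opNorm (A - B) := by
  obtain ⟨hamono, σ, hσ⟩ := ha
  obtain ⟨hbmono, τ, hτ⟩ := hb
  have hin : (i : ℕ) < n := i.isLt
  set bA := hA.eigenvectorBasis with hbA
  set bB := hB.eigenvectorBasis with hbB
  set SA : Set (Fin n) := σ '' {j | j ≤ i} with hSA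
  set SB : Set (Fin n) := τ '' {j | i ≤ j} with hSB
  set U := Submodule.span ℝ (bA '' SA) with hU
  set W := Submodule.span ℝ (bB '' SB) with hW
  -- families
  have hi1n : (i : ℕ) + 1 ≤ n := hin
  set fidx : Fin ((i : ℕ) + 1) → Fin n := fun k => σ (Fin.castLE hi1n k) with hfidx
  set gidx : Fin (n - (i : ℕ)) → Fin n := fun k => τ ⟨(i : ℕ) + (k : ℕ), by omega⟩ with hgidx
  set f : Fin ((i : ℕ) + 1) → EuclideanSpace ℝ (Fin n) := fun k => bA (fidx k) with hf
  set g : Fin (n - (i : ℕ)) → EuclideanSpace ℝ (Fin n) := fun k => bB (gidx k) with hg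
  have hfidxi : Function.Injective fidx :=
    σ.injective.comp (Fin.castLE_injective hi1n)
  have hgidxi : Function.Injective gidx := by
    intro k l hkl
    have h4 : (i : ℕ) + (k : ℕ) = (i : ℕ) + (l : ℕ) := congrArg Fin.val (τ.injective hkl)
    exact Fin.ext (by omega)
  have hrf : Set.range f = bA '' SA := by
    ext y
    constructor
    · rintro ⟨k, rfl⟩
      refine ⟨σ (Fin.castLE hi1n k), ⟨Fin.castLE hi1n k, ?_, rfl⟩, rfl⟩
      rw [Set.mem_setOf_eq, Fin.le_def, Fin.coe_castLE]
      omega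
    · rintro ⟨z, ⟨j, hj, rfl⟩, rfl⟩
      rw [Set.mem_setOf_eq, Fin.le_def] at hj
      exact ⟨⟨(j : ℕ), by omega⟩, congrArg bA (congrArg σ (Fin.ext (by simp)))⟩
  have hrg : Set.range g = bB '' SB := by
    ext y
    constructor
    · rintro ⟨k, rfl⟩
      refine ⟨τ ⟨(i : ℕ) + (k : ℕ), by omega⟩, ⟨⟨(i : ℕ) + (k : ℕ), by omega⟩, ?_, rfl⟩, rfl⟩
      rw [Set.mem_setOf_eq, Fin.le_def]
      simp
    · rintro ⟨z, ⟨j, hj, rfl⟩, rfl⟩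
      rw [Set.mem_setOf_eq, Fin.le_def] at hj
      refine ⟨⟨(j : ℕ) - (i : ℕ), by omega⟩, congrArg bB (congrArg τ (Fin.ext ?_))⟩
      simp
      omega
  have hlif : LinearIndependent ℝ f := by
    have h := (bA.orthonormal.comp fidx hfidxi).linearIndependent
    exact h
  have hlig : LinearIndependent ℝ g := by
    have h := (bB.orthonormal.comp gidx hgidxi).linearIndependent
    exact h
  have hdimU : Module.finrank ℝ U = (i : ℕ) + 1 := by
    rw [hU, ← hrf, finrank_span_eq_card hlif, Fintype.card_fin]
  have hdimW : Module.finrank ℝ W = n - (i : ℕ) := by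
    rw [hW, ← hrg, finrank_span_eq_card hlig, Fintype.card_fin]
  -- intersection nontrivial
  have hdim : U ⊓ W ≠ ⊥ := by
    intro hbot
    have hsum := Submodule.finrank_sup_add_finrank_inf_eq U W
    rw [hbot, finrank_bot, add_zero, hdimU, hdimW] at hsum
    have hle : Module.finrank ℝ ↥(U ⊔ W) ≤ n := by
      have := Submodule.finrank_le (U ⊔ W)
      rwa [finrank_euclideanSpace_fin] at this
    omega
  obtain ⟨x, hxUW, hx0⟩ := Submodule.exists_mem_ne_zero_of_ne_bot hdim
  have hxU : x ∈ U := hxUW.1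
  have hxW : x ∈ W := hxUW.2
  have hxn : (0 : ℝ) < ‖x‖ ^ 2 := by
    have h0 : (0:ℝ) < ‖x‖ := norm_pos_iff.mpr hx0
    positivity
  -- Rayleigh bounds
  have hga : α i * ‖x‖ ^ 2 ≤ ⟪x, Matrix.toEuclideanLin A x⟫ := by
    refine quad_ge_on_span A hA SA (α i) ?_ x hxU
    rintro k ⟨j, hj, rfl⟩
    have : α j = hA.eigenvalues (σ j) := congrFun hσ j
    rw [← this]
    exact hamono hj
  have hlb : ⟪x, Matrix.toEuclideanLin B x⟫ ≤ β i * ‖x‖ ^ 2 := by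
    refine quad_le_on_span B hB SB (β i) ?_ x hxW
    rintro k ⟨j, hj, rfl⟩
    have : β j = hB.eigenvalues (τ j) := congrFun hτ j
    rw [← this]
    exact hbmono hj
  have hdiff : ⟪x, Matrix.toEuclideanLin A x⟫ - ⟪x, Matrix.toEuclideanLin B x⟫
      = ⟪x, Matrix.toEuclideanLin (A - B) x⟫ := by
    rw [map_sub]
    simp [inner_sub_right]
  have hop : ⟪x, Matrix.toEuclideanLin (A - B) x⟫ ≤ opNorm (A - B) * ‖x‖ ^ 2 :=
    le_trans (le_abs_self _) (inner_quad_abs_le (A - B) x)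
  have key : α i * ‖x‖ ^ 2 ≤ (β i + opNorm (A - B)) * ‖x‖ ^ 2 := by nlinarith
  exact le_of_mul_le_mul_right (by simpa [mul_comm] using key) hxn

lemma opNorm_neg' (A : Matrix (Fin n) (Fin n) ℝ) : opNorm (-A) = opNorm A := by
  unfold opNorm
  rw [map_neg, norm_neg]

lemma weyl (A B : Matrix (Fin n) (Fin n) ℝ) (hA : A.IsHermitian) (hB : B.IsHermitian)
    (α β : Fin n → ℝ) (ha : IsEigList hA α) (hb : IsEigList hB β) (i : Fin n) :
    |α i - β i| ≤ opNorm (A - B) := by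
  rw [abs_sub_le_iff]
  constructor
  · have := weyl_one A B hA hB α β ha hb i
    linarith
  · have := weyl_one B A hB hA β α hb ha i
    have h2 : opNorm (B - A) = opNorm (A - B) := by
      rw [← opNorm_neg' (B - A), neg_sub]
    linarith


lemma spectrum_subset_range (A : Matrix (Fin n) (Fin n) ℝ) (hA : A.IsHermitian) :
    spectrum ℝ A ⊆ Set.range hA.eigenvalues := by
  intro μ hμ
  rw [← Matrix.spectrum_toEuclideanLin] at hμ
  have hev : Module.End.HasEigenvalue (Matrix.toEuclideanLin A) μ :=
    Module.End.hasEigenvalue_iff_mem_spectrum.mpr hμ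
  obtain ⟨x, hx⟩ := hev.exists_hasEigenvector
  have hTx : Matrix.toEuclideanLin A x = μ • x := hx.apply_eq_smul
  have hx0 : x ≠ 0 := hx.2
  have hex : ∃ j, ⟪hA.eigenvectorBasis j, x⟫ ≠ 0 := by
    by_contra h
    push_neg at h
    apply hx0
    have hsum := hA.eigenvectorBasis.sum_repr' x
    rw [← hsum]
    refine Finset.sum_eq_zero fun j _ => ?_
    rw [h j, zero_smul]
  obtain ⟨j, hj⟩ := hex
  refine ⟨j, ?_⟩
  have h1 : ⟪hA.eigenvectorBasis j, Matrix.toEuclideanLin A x⟫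
      = hA.eigenvalues j * ⟪hA.eigenvectorBasis j, x⟫ := inner_T_eig A hA j x
  rw [hTx, real_inner_smul_right] at h1
  exact mul_right_cancel₀ hj h1.symm

lemma abs_eig_le_specRad (A : Matrix (Fin n) (Fin n) ℝ) (hA : A.IsHermitian) (j : Fin n) :
    |hA.eigenvalues j| ≤ specRad A := by
  have hsub : {r : ℝ | ∃ μ ∈ spectrum ℝ A, r = |μ|} ⊆
      Set.range (fun j => |hA.eigenvalues j|) := by
    rintro r ⟨μ, hμ, rfl⟩
    obtain ⟨k, hk⟩ := spectrum_subset_range A hA hμ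
    exact ⟨k, by simp [hk]⟩
  have hbdd : BddAbove {r : ℝ | ∃ μ ∈ spectrum ℝ A, r = |μ|} :=
    (Set.finite_range _).bddAbove.mono hsub
  exact le_csSup hbdd ⟨hA.eigenvalues j, hA.eigenvalues_mem_spectrum_real j, rfl⟩

lemma specRad_nonneg (hn : 0 < n) (A : Matrix (Fin n) (Fin n) ℝ) (hA : A.IsHermitian) :
    0 ≤ specRad A :=
  le_trans (abs_nonneg _) (abs_eig_le_specRad A hA ⟨0, hn⟩)

lemma opNorm_le_specRad (hn : 0 < n) (A : Matrix (Fin n) (Fin n) ℝ) (hA : A.IsHermitian) :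
    opNorm A ≤ specRad A :=
  opNorm_le_of_eig A hA _ (specRad_nonneg hn A hA) (abs_eig_le_specRad A hA)

lemma psd_quad (C : Matrix (Fin n) (Fin n) ℝ) (hC : C.PosSemidef)
    (x : EuclideanSpace ℝ (Fin n)) : 0 ≤ ⟪x, Matrix.toEuclideanLin C x⟫ := by
  have h := hC.dotProduct_mulVec_nonneg (fun i => x i)
  have e : ⟪x, Matrix.toEuclideanLin C x⟫
      = dotProduct (star fun i => x i) (C *ᵥ fun i => x i) := by
    simp only [PiLp.inner_apply, RCLike.inner_apply, starRingEnd_apply, star_trivial,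
      dotProduct, Matrix.mulVec, elin_apply]
    exact Finset.sum_congr rfl fun i _ => mul_comm _ _
  rw [e]
  exact h




lemma herm_entry {X : Matrix (Fin n) (Fin n) ℝ} (hX : X.IsHermitian) (i j : Fin n) :
    X j i = X i j := by
  have := congrFun (congrFun hX i) j
  simpa [Matrix.conjTranspose_apply] using this

lemma lap_herm {X : Matrix (Fin n) (Fin n) ℝ} (hX : X.IsHermitian) : (lap X).IsHermitian := by
  refine Matrix.ext fun i j => ?_
  simp only [Matrix.conjTranspose_apply, star_trivial, lap, Matrix.sub_apply,
    Matrix.diagonal_apply, adjPart, Matrix.of_apply]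
  by_cases h : i = j
  · subst h; simp
  · simp [h, Ne.symm h, herm_entry hX i j]

lemma opNorm_add_le (X Y : Matrix (Fin n) (Fin n) ℝ) :
    opNorm (X + Y) ≤ opNorm X + opNorm Y := by
  unfold opNorm
  rw [map_add]
  exact norm_add_le _ _

lemma opNorm_nonneg' (X : Matrix (Fin n) (Fin n) ℝ) : 0 ≤ opNorm X := norm_nonneg _

lemma sandwich_opNorm (hn : 0 < n) (ε : ℝ) (hε : 0 < ε)
    (E L : Matrix (Fin n) (Fin n) ℝ) (hE : E.IsHermitian) (hL : L.IsHermitian)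
    (h1 : (E + ε • L).PosSemidef) (h2 : (ε • L - E).PosSemidef) :
    opNorm E ≤ ε * specRad L := by
  refine opNorm_le_of_eig E hE _ (mul_nonneg hε.le (specRad_nonneg hn L hL)) fun j => ?_
  set v := hE.eigenvectorBasis j with hv
  have hnv : ‖v‖ = 1 := hE.eigenvectorBasis.orthonormal.1 j
  have hqE : ⟪v, Matrix.toEuclideanLin E v⟫ = hE.eigenvalues j := by
    rw [inner_T_eig E hE j v, real_inner_self_eq_norm_sq, hnv]
    simp
  have h1v := psd_quad _ h1 v
  have h2v := psd_quad _ h2 v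
  have hadd : Matrix.toEuclideanLin (E + ε • L) v
      = Matrix.toEuclideanLin E v + ε • Matrix.toEuclideanLin L v := by
    have hsm : Matrix.toEuclideanLin (ε • L) = ε • Matrix.toEuclideanLin (𝕜 := ℝ) (m := Fin n) (n := Fin n) L :=
      _root_.map_smul (Matrix.toEuclideanLin (𝕜 := ℝ) (m := Fin n) (n := Fin n)) ε L
    rw [map_add, hsm]
    simp [LinearMap.add_apply, LinearMap.smul_apply]
  have hsub : Matrix.toEuclideanLin (ε • L - E) v
      = ε • Matrix.toEuclideanLin L v - Matrix.toEuclideanLin E v := by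
    have hsm : Matrix.toEuclideanLin (ε • L) = ε • Matrix.toEuclideanLin (𝕜 := ℝ) (m := Fin n) (n := Fin n) L :=
      _root_.map_smul (Matrix.toEuclideanLin (𝕜 := ℝ) (m := Fin n) (n := Fin n)) ε L
    rw [map_sub, hsm]
    simp [LinearMap.sub_apply, LinearMap.smul_apply]
  rw [hadd, inner_add_right, real_inner_smul_right] at h1v
  rw [hsub, inner_sub_right, real_inner_smul_right] at h2v
  have hqL : ⟪v, Matrix.toEuclideanLin L v⟫ ≤ specRad L := by
    have := le_trans (le_abs_self _) (inner_quad_abs_le L v)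
    have h3 := opNorm_le_specRad hn L hL
    rw [hnv] at this
    simpa using le_trans this (by simpa using h3)
  rw [abs_le]
  constructor <;> nlinarith

lemma rowsum_D_le (E : Matrix (Fin n) (Fin n) ℝ) (hE : E.IsHermitian)
    (D : Matrix (Fin n) (Fin n) ℝ) (hD : ∀ i j, D i j = if i = j then 0 else E i j) (i : Fin n) :
    ∑ j, |D i j| ≤ Real.sqrt n * opNorm E := by
  set e : EuclideanSpace ℝ (Fin n) := EuclideanSpace.single i (1 : ℝ) with he
  have hTe : ∀ k, Matrix.toEuclideanLin E e k = E i k := by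
    intro k
    rw [elin_apply]
    have : ∀ j, e j = if j = i then (1:ℝ) else 0 := fun j => EuclideanSpace.single_apply i 1 j
    simp only [this, mul_ite, mul_one, mul_zero, Finset.sum_ite_eq', Finset.mem_univ, if_true]
    exact herm_entry hE i k
  have hEsq : ∑ j, E i j ^ 2 = ‖Matrix.toEuclideanLin E e‖ ^ 2 := by
    rw [enorm_sq]
    exact Finset.sum_congr rfl fun k _ => by rw [hTe k]
  have hne : ‖e‖ = 1 := by
    rw [he, EuclideanSpace.norm_single]
    norm_num
  have hTeB : ‖Matrix.toEuclideanLin E e‖ ≤ opNorm E := by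
    rw [← clm_eq_lin]
    calc ‖Matrix.toEuclideanCLM (𝕜 := ℝ) E e‖ ≤ opNorm E * ‖e‖ :=
          ContinuousLinearMap.le_opNorm _ _
      _ = opNorm E := by rw [hne, mul_one]
  apply norm_le_of_sq_le (mul_nonneg (Real.sqrt_nonneg _) (opNorm_nonneg' _))
    (Finset.sum_nonneg fun j _ => abs_nonneg _)
  have cs : (∑ j, 1 * |D i j|) ^ 2 ≤ (∑ j : Fin n, (1:ℝ) ^ 2) * (∑ j, |D i j| ^ 2) :=
    Finset.sum_mul_sq_le_sq_mul_sq _ _ _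
  simp only [one_mul, one_pow] at cs
  have hcard : (∑ j : Fin n, (1:ℝ)) = n := by simp
  have hDE : ∑ j, |D i j| ^ 2 ≤ ∑ j, E i j ^ 2 := by
    refine Finset.sum_le_sum fun j _ => ?_
    rw [hD i j]
    by_cases h : i = j
    · simp only [if_pos h, abs_zero]
      nlinarith [sq_nonneg (E i j)]
    · simp [h, sq_abs]
  calc (∑ j, |D i j|) ^ 2 ≤ (n : ℝ) * ∑ j, |D i j| ^ 2 := by rw [← hcard]; exact cs
    _ ≤ (n : ℝ) * ‖Matrix.toEuclideanLin E e‖ ^ 2 := by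
        rw [← hEsq]
        exact mul_le_mul_of_nonneg_left hDE (Nat.cast_nonneg n)
    _ ≤ (n : ℝ) * opNorm E ^ 2 := by
        refine mul_le_mul_of_nonneg_left ?_ (Nat.cast_nonneg n)
        exact pow_le_pow_left₀ (norm_nonneg _) hTeB 2
    _ = (Real.sqrt n * opNorm E) ^ 2 := by
        rw [mul_pow, Real.sq_sqrt (Nat.cast_nonneg n)]

theorem main_theorem {n : ℕ} (hn : 0 < n) (ε : ℝ) (hε : 0 < ε)
    (M Ahat : Matrix (Fin n) (Fin n) ℝ)
    (hM : M.IsHermitian) (hODN : ∀ i j, i ≠ j → 0 ≤ M i j)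
    (hAhat : Ahat.IsHermitian) (hAdiag : ∀ i, Ahat i i = 0)
    (hAnn : ∀ i j, i ≠ j → 0 ≤ Ahat i j)
    (h1 : PSDle ((1 - ε) • lap M) (lap Ahat))
    (h2 : PSDle (lap Ahat) ((1 + ε) • lap M))
    (hMhat : (Ahat + (((⨆ k, M k k) + (⨅ k, M k k)) / 2) •
        (1 : Matrix (Fin n) (Fin n) ℝ)).IsHermitian)
    (lam lamh : Fin n → ℝ) (hlam : IsEigList hM lam) (hlamh : IsEigList hMhat lamh) :
    ∀ i, |lam i - lamh i| ≤
      ε * Real.sqrt n * specRad (lap M) + ((⨆ k, M k k) - (⨅ k, M k k)) / 2 := by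
  intro i
  set Δ := (⨆ k, M k k) with hΔ
  set δ := (⨅ k, M k k) with hδ
  set d := (Δ + δ) / 2 with hd
  set Mhat := Ahat + d • (1 : Matrix (Fin n) (Fin n) ℝ) with hMh
  set L := lap M with hL
  set E := lap Ahat - lap M with hEdef
  have hLh : L.IsHermitian := lap_herm hM
  have hE : E.IsHermitian := (lap_herm hAhat).sub (lap_herm hM)
  -- PSD sandwich
  have h1' : (E + ε • L).PosSemidef := by
    have : lap Ahat - (1 - ε) • lap M = E + ε • L := by
      rw [hEdef, hL]
      module
    rw [← this]
    exact h1
  have h2' : (ε • L - E).PosSemidef := by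
    have : (1 + ε) • lap M - lap Ahat = ε • L - E := by
      rw [hEdef, hL]
      module
    rw [← this]
    exact h2
  have hEop : opNorm E ≤ ε * specRad L := sandwich_opNorm hn ε hε E L hE hLh h1' h2'
  -- diagonal entry bounds
  have hNe : Nonempty (Fin n) := ⟨⟨0, hn⟩⟩
  have hbddA : BddAbove (Set.range fun k => M k k) := (Set.finite_range _).bddAbove
  have hbddB : BddBelow (Set.range fun k => M k k) := (Set.finite_range _).bddBelow
  have hup : ∀ k, M k k ≤ Δ := fun k => le_ciSup hbddA k
  have hlo : ∀ k, δ ≤ M k k := fun k => ciInf_le hbddB k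
  have hΔδ : 0 ≤ (Δ - δ) / 2 := by
    have := hup ⟨0, hn⟩
    have := hlo ⟨0, hn⟩
    linarith
  -- decomposition
  set D := adjPart M - Ahat with hDdef
  have hDentry : ∀ i j, D i j = if i = j then 0 else E i j := by
    intro a b
    by_cases h : a = b
    · subst h
      simp [hDdef, adjPart, hAdiag a]
    · simp only [hDdef, hEdef, Matrix.sub_apply, adjPart, lap, Matrix.of_apply,
        Matrix.diagonal_apply, if_neg h, Ne.symm, h]
      simp [h]
      ring
  have hDh : D.IsHermitian := by
    refine Matrix.ext fun a b => ?_
    simp only [Matrix.conjTranspose_apply, star_trivial, hDentry a b, hDentry b a]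
    by_cases h : a = b
    · simp [h]
    · simp only [if_neg h, if_neg (Ne.symm h)]
      exact herm_entry hE a b
  set R := Matrix.diagonal (fun k => M k k - d) with hRdef
  have hRh : R.IsHermitian := by
    refine Matrix.ext fun a b => ?_
    simp only [Matrix.conjTranspose_apply, star_trivial, hRdef, Matrix.diagonal_apply]
    by_cases h : a = b
    · simp [h]
    · simp [h, Ne.symm h]
  have hdecomp : M - Mhat = D + R := by
    refine Matrix.ext fun a b => ?_
    simp only [Matrix.sub_apply, Matrix.add_apply, hMh, hDdef, hRdef, adjPart,
      Matrix.smul_apply, Matrix.one_apply, Matrix.diagonal_apply, Matrix.of_apply,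
      smul_eq_mul]
    by_cases h : a = b
    · subst h
      simp [hAdiag a]
    · simp [h]
  -- norm bounds
  have hDop : opNorm D ≤ Real.sqrt n * opNorm E := by
    refine opNorm_le_rowsum D hDh _ (mul_nonneg (Real.sqrt_nonneg _) (opNorm_nonneg' _))
      fun a => rowsum_D_le E hE D hDentry a
  have hRop : opNorm R ≤ (Δ - δ) / 2 := by
    refine opNorm_le_rowsum R hRh _ hΔδ fun a => ?_
    have : ∑ j, |R a j| = |M a a - d| := by
      rw [Finset.sum_eq_single a]
      · simp [hRdef]
      · intro b _ hb
        simp [hRdef, Matrix.diagonal_apply, Ne.symm hb]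
      · intro h
        exact absurd (Finset.mem_univ a) h
    rw [this, abs_le]
    constructor
    · have := hlo a; rw [hd]; linarith
    · have := hup a; rw [hd]; linarith
  -- Weyl
  have hW := weyl M Mhat hM hMhat lam lamh hlam hlamh i
  calc |lam i - lamh i| ≤ opNorm (M - Mhat) := hW
    _ = opNorm (D + R) := by rw [hdecomp]
    _ ≤ opNorm D + opNorm R := opNorm_add_le D R
    _ ≤ Real.sqrt n * opNorm E + (Δ - δ) / 2 := add_le_add hDop hRop
    _ ≤ Real.sqrt n * (ε * specRad L) + (Δ - δ) / 2 := by
        have := mul_le_mul_of_nonneg_left hEop (Real.sqrt_nonneg (n : ℝ))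
        linarith
    _ = ε * Real.sqrt n * specRad L + (Δ - δ) / 2 := by ring
end

section
/- Davis–Kahan consequence combined with a norm bound: let A, B be real symmetric n×n matrices with ‖A − B‖ ≤ c, eigenvalues α_1 ≥ ... ≥ α_n of A with unit eigenvectors a_i, and eigenvalues β_1 ≥ ... ≥ β_n of B with unit eigenvectors b_i. If θ_i denotes the angle between the spans of a_i and b_i and min{|β_{i−1} − α_i|, |β_{i+1} − α_i|} > 0, then sin θ_i ≤ c / min{|β_{i−1} − α_i|, |β_{i+1} − α_i|}. -/
/-!
Weyl's inequality `|α j - β j| ≤ ‖A - B‖` comes from a dimension count: the span of the top `j + 1`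
eigenvectors of `A` meets the span of the bottom `n - j` eigenvectors of `B`, and on a common
nonzero vector the two Rayleigh quotients differ by at most `‖A - B‖`. If `‖A - B‖ < gap`, Weyl
places `β (i - 1)` above and `β (i + 1)` below `α i`, so every eigenvalue of `B` other than `β i`
is at distance at least `gap` from `α i`, and `β i` is a simple eigenvalue with eigenvector `± b i`.
Expanding `a i` in an orthonormal eigenbasis of `B`, the components orthogonal to `b i` then give
`gap * sin θ ≤ ‖(B - α i) a i‖ = ‖(B - A) a i‖ ≤ ‖A - B‖`.
If `‖A - B‖ ≥ gap`, the bound exceeds `1`.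
-/

open Matrix BigOperators

open scoped RealInnerProductSpace

section Eigenbasis

variable {E : Type*} [NormedAddCommGroup E] [InnerProductSpace ℝ E]
  {ι : Type*} [Fintype ι] {T : E →ₗ[ℝ] E} {e : OrthonormalBasis ι ℝ E} {α : ι → ℝ}

namespace OrthonormalBasis

lemma inner_apply_of_apply_eq_smul (he : ∀ k, T (e k) = α k • e k) (k : ι) (x : E) :
    ⟪e k, T x⟫ = α k * ⟪e k, x⟫ := by
  have hTx : T x = ∑ j, (⟪e j, x⟫ * α j) • e j := by
    conv_lhs => rw [← e.sum_repr' x]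
    simp only [map_sum, map_smul, he, smul_smul]
  rw [hTx, e.orthonormal.inner_right_fintype, mul_comm]

lemma inner_self_apply_eq_sum (he : ∀ k, T (e k) = α k • e k) (x : E) :
    ⟪x, T x⟫ = ∑ k, α k * ⟪e k, x⟫ ^ 2 := by
  rw [← e.sum_inner_mul_inner x (T x)]
  refine Finset.sum_congr rfl fun k _ => ?_
  rw [inner_apply_of_apply_eq_smul he, real_inner_comm x]
  ring

lemma inner_eq_zero_of_mem_span {s : Set ι} {x : E} (hx : x ∈ Submodule.span ℝ (e '' s))
    {k : ι} (hk : k ∉ s) : ⟪e k, x⟫ = 0 := by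
  have hle : Submodule.span ℝ (e '' s) ≤ LinearMap.ker (innerₛₗ ℝ (e k)) := by
    rw [Submodule.span_le]
    rintro _ ⟨m, hm, rfl⟩
    exact e.orthonormal.2 fun h => hk (h ▸ hm)
  exact hle hx

lemma le_inner_self_apply_of_mem_span (he : ∀ k, T (e k) = α k • e k) {s : Set ι} {c : ℝ}
    (hs : ∀ k ∈ s, c ≤ α k) {x : E} (hx : x ∈ Submodule.span ℝ (e '' s)) :
    c * ‖x‖ ^ 2 ≤ ⟪x, T x⟫ := by
  rw [inner_self_apply_eq_sum he, ← e.sum_sq_inner_right, Finset.mul_sum]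
  refine Finset.sum_le_sum fun k _ => ?_
  by_cases hk : k ∈ s
  · exact mul_le_mul_of_nonneg_right (hs k hk) (sq_nonneg _)
  · simp [inner_eq_zero_of_mem_span hx hk]

lemma inner_self_apply_le_of_mem_span (he : ∀ k, T (e k) = α k • e k) {s : Set ι} {c : ℝ}
    (hs : ∀ k ∈ s, α k ≤ c) {x : E} (hx : x ∈ Submodule.span ℝ (e '' s)) :
    ⟪x, T x⟫ ≤ c * ‖x‖ ^ 2 := by
  rw [inner_self_apply_eq_sum he, ← e.sum_sq_inner_right, Finset.mul_sum]
  refine Finset.sum_le_sum fun k _ => ?_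
  by_cases hk : k ∈ s
  · exact mul_le_mul_of_nonneg_right (hs k hk) (sq_nonneg _)
  · simp [inner_eq_zero_of_mem_span hx hk]

lemma finrank_span_image_s16 (e : OrthonormalBasis ι ℝ E) (s : Finset ι) :
    Module.finrank ℝ (Submodule.span ℝ (e '' s)) = s.card := by
  have hli : LinearIndependent ℝ fun k : (s : Set ι) => e k :=
    (e.orthonormal.comp _ Subtype.val_injective).linearIndependent
  rw [Set.image_eq_range, finrank_span_eq_card hli]
  simp

lemma inner_eq_zero_of_apply_eq_smul (he : ∀ k, T (e k) = α k • e k) {μ : ℝ} {v : E}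
    (hv : T v = μ • v) {k : ι} (hk : α k ≠ μ) : ⟪e k, v⟫ = 0 := by
  have h := inner_apply_of_apply_eq_smul he k v
  rw [hv, real_inner_smul_right] at h
  by_contra hne
  exact hk (mul_right_cancel₀ hne h.symm)

lemma inner_sq_eq_of_inner_eq_zero {k₀ : ι} {v : E} (hv : ∀ k ≠ k₀, ⟪e k, v⟫ = 0) (u : E) :
    ⟪u, v⟫ ^ 2 = ⟪e k₀, u⟫ ^ 2 * ‖v‖ ^ 2 := by
  have hv' : v = ⟪e k₀, v⟫ • e k₀ := by
    conv_lhs => rw [← e.sum_repr' v]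
    exact Finset.sum_eq_single k₀ (fun k _ hk => by rw [hv k hk, zero_smul]) (by simp)
  rw [hv', real_inner_smul_right, norm_smul, e.norm_eq_one, mul_one, Real.norm_eq_abs, mul_pow,
    sq_abs, real_inner_comm (e k₀) u]
  ring

lemma sq_mul_sub_sq_inner_le (he : ∀ k, T (e k) = α k • e k) {k₀ : ι} {μ gap : ℝ}
    (hgap : 0 ≤ gap) (hfar : ∀ k ≠ k₀, gap ≤ |α k - μ|) (u : E) :
    gap ^ 2 * (‖u‖ ^ 2 - ⟪e k₀, u⟫ ^ 2) ≤ ‖T u - μ • u‖ ^ 2 := by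
  classical
  have hcoef : ∀ k, ⟪e k, T u - μ • u⟫ = (α k - μ) * ⟪e k, u⟫ := fun k => by
    rw [inner_sub_right, inner_apply_of_apply_eq_smul he, real_inner_smul_right]
    ring
  rw [← e.sum_sq_inner_right u, ← e.sum_sq_inner_right (T u - μ • u),
    ← Finset.add_sum_erase _ _ (Finset.mem_univ k₀), add_sub_cancel_left, Finset.mul_sum]
  calc ∑ k ∈ Finset.univ.erase k₀, gap ^ 2 * ⟪e k, u⟫ ^ 2
      ≤ ∑ k ∈ Finset.univ.erase k₀, ((α k - μ) * ⟪e k, u⟫) ^ 2 := by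
        refine Finset.sum_le_sum fun k hk => ?_
        rw [mul_pow, ← sq_abs (α k - μ)]
        gcongr
        exact hfar k (Finset.ne_of_mem_erase hk)
    _ ≤ ∑ k, ((α k - μ) * ⟪e k, u⟫) ^ 2 :=
        Finset.sum_le_sum_of_subset_of_nonneg (Finset.erase_subset _ _)
          fun _ _ _ => sq_nonneg _
    _ = ∑ k, ⟪e k, T u - μ • u⟫ ^ 2 := by simp_rw [hcoef]

end OrthonormalBasis

end Eigenbasis

lemma gap_le_abs_sub_of_ne {n : ℕ} {α β : Fin n → ℝ} (hα : Antitone α) (hβ : Antitone β)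
    {c gap : ℝ} (hc : ∀ j, |α j - β j| ≤ c) (hcg : c < gap) {i : Fin n}
    (hgap1 : ∀ j : Fin n, (j : ℕ) + 1 = (i : ℕ) → gap ≤ |β j - α i|)
    (hgap2 : ∀ j : Fin n, (j : ℕ) = (i : ℕ) + 1 → gap ≤ |β j - α i|)
    {j : Fin n} (hj : j ≠ i) : gap ≤ |β j - α i| := by
  rcases Fin.lt_or_lt_of_ne hj with hji | hij
  · let p : Fin n := ⟨i - 1, by omega⟩
    have hp : (p : ℕ) + 1 = i := by simp only [p]; omega
    have hβp : β p ≤ β j := hβ (Fin.le_def.2 (by simp only [p]; omega))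
    have hαp : α i ≤ α p := hα (Fin.le_def.2 (by omega))
    have hcp := (abs_le.1 (hc p)).2
    have hgp := hgap1 p hp
    rw [le_abs'] at hgp ⊢
    right
    rcases hgp with h | h <;> linarith
  · let q : Fin n := ⟨i + 1, by omega⟩
    have hβq : β j ≤ β q := hβ (Fin.le_def.2 (by simp only [q]; omega))
    have hαq : α q ≤ α i := hα (Fin.le_def.2 (by simp only [q]; omega))
    have hcq := (abs_le.1 (hc q)).1
    have hgq := hgap2 q rfl
    rw [le_abs'] at hgq ⊢
    left
    rcases hgq with h | h <;> linarith

section Perturbation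

variable {E : Type*} [NormedAddCommGroup E] [InnerProductSpace ℝ E] [FiniteDimensional ℝ E]
  {n : ℕ}

lemma OrthonormalBasis.exists_ne_zero_mem_span_Iic_inf_span_Ici
    (e f : OrthonormalBasis (Fin n) ℝ E) (j : Fin n) :
    ∃ x ≠ 0, x ∈ Submodule.span ℝ (e '' Set.Iic j) ∧ x ∈ Submodule.span ℝ (f '' Set.Ici j) := by
  set U := Submodule.span ℝ (e '' Set.Iic j) with hU
  set W := Submodule.span ℝ (f '' Set.Ici j) with hW
  have hE : Module.finrank ℝ E = n := by simpa using Module.finrank_eq_card_basis e.toBasis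
  have hdim : Module.finrank ℝ U + Module.finrank ℝ W = n + 1 := by
    rw [hU, hW, ← Finset.coe_Iic, ← Finset.coe_Ici, e.finrank_span_image_s16, f.finrank_span_image_s16,
      Fin.card_Iic, Fin.card_Ici]
    omega
  have hmeet : ¬ Disjoint U W := fun h => by
    have := Submodule.finrank_add_finrank_le_of_disjoint h
    omega
  rw [Submodule.disjoint_def] at hmeet
  push Not at hmeet
  obtain ⟨x, hxU, hxW, hx⟩ := hmeet
  exact ⟨x, hx, hxU, hxW⟩

variable {T S : E →L[ℝ] E} {e f : OrthonormalBasis (Fin n) ℝ E} {α β : Fin n → ℝ}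

theorem sub_le_norm_sub_of_eigenbasis (hα : Antitone α) (hβ : Antitone β)
    (he : ∀ k, T (e k) = α k • e k) (hf : ∀ k, S (f k) = β k • f k) (j : Fin n) :
    α j - β j ≤ ‖T - S‖ := by
  obtain ⟨x, hx, hxe, hxf⟩ := e.exists_ne_zero_mem_span_Iic_inf_span_Ici f j
  have hT : α j * ‖x‖ ^ 2 ≤ ⟪x, T x⟫ :=
    e.le_inner_self_apply_of_mem_span he (fun k hk => hα hk) hxe
  have hS : ⟪x, S x⟫ ≤ β j * ‖x‖ ^ 2 :=
    f.inner_self_apply_le_of_mem_span hf (fun k hk => hβ hk) hxf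
  have hTS : ⟪x, T x⟫ - ⟪x, S x⟫ ≤ ‖T - S‖ * ‖x‖ ^ 2 := by
    rw [← inner_sub_right, ← _root_.sub_apply]
    calc ⟪x, (T - S) x⟫ ≤ ‖x‖ * ‖(T - S) x‖ := real_inner_le_norm _ _
      _ ≤ ‖x‖ * (‖T - S‖ * ‖x‖) := by gcongr; exact (T - S).le_opNorm x
      _ = ‖T - S‖ * ‖x‖ ^ 2 := by ring
  have hx2 : 0 < ‖x‖ ^ 2 := by positivity
  nlinarith

theorem abs_sub_le_norm_sub_of_eigenbasis (hα : Antitone α) (hβ : Antitone β)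
    (he : ∀ k, T (e k) = α k • e k) (hf : ∀ k, S (f k) = β k • f k) (j : Fin n) :
    |α j - β j| ≤ ‖T - S‖ :=
  abs_sub_le_iff.2 ⟨sub_le_norm_sub_of_eigenbasis hα hβ he hf j,
    norm_sub_rev S T ▸ sub_le_norm_sub_of_eigenbasis hβ hα hf he j⟩

theorem sqrt_one_sub_inner_sq_le_norm_sub_div (hα : Antitone α) (hβ : Antitone β)
    (he : ∀ k, T (e k) = α k • e k) (hf : ∀ k, S (f k) = β k • f k)
    {u v : E} (hu : ‖u‖ = 1) (hv : ‖v‖ = 1) {i : Fin n} (hTu : T u = α i • u)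
    (hSv : S v = β i • v) {gap : ℝ} (hgap : 0 < gap)
    (hgap1 : ∀ j : Fin n, (j : ℕ) + 1 = (i : ℕ) → gap ≤ |β j - α i|)
    (hgap2 : ∀ j : Fin n, (j : ℕ) = (i : ℕ) + 1 → gap ≤ |β j - α i|) :
    √(1 - ⟪u, v⟫ ^ 2) ≤ ‖T - S‖ / gap := by
  rcases le_or_gt gap ‖T - S‖ with hle | hlt
  · calc √(1 - ⟪u, v⟫ ^ 2) ≤ 1 := Real.sqrt_le_one.2 (by linarith [sq_nonneg ⟪u, v⟫])
      _ ≤ ‖T - S‖ / gap := (one_le_div hgap).2 hle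
  have hweyl := abs_sub_le_norm_sub_of_eigenbasis hα hβ he hf
  have hfar : ∀ k ≠ i, gap ≤ |β k - α i| := fun k hk =>
    gap_le_abs_sub_of_ne hα hβ hweyl hlt hgap1 hgap2 hk
  have hsimple : ∀ k ≠ i, ⟪f k, v⟫ = 0 := fun k hk =>
    f.inner_eq_zero_of_apply_eq_smul hf hSv fun hβk => by
      have := hfar k hk
      rw [hβk, abs_sub_comm] at this
      linarith [hweyl i]
  have hresidual : ‖S u - α i • u‖ ≤ ‖T - S‖ := by
    rw [← hTu, ← _root_.sub_apply, norm_sub_rev T S]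
    simpa [hu] using (S - T).le_opNorm u
  rw [f.inner_sq_eq_of_inner_eq_zero hsimple, hv, one_pow, mul_one,
    Real.sqrt_le_left (by positivity), div_pow, le_div_iff₀ (by positivity)]
  calc (1 - ⟪f i, u⟫ ^ 2) * gap ^ 2 = gap ^ 2 * (‖u‖ ^ 2 - ⟪f i, u⟫ ^ 2) := by rw [hu]; ring
    _ ≤ ‖S u - α i • u‖ ^ 2 := f.sq_mul_sub_sq_inner_le hf hgap.le hfar u
    _ ≤ ‖T - S‖ ^ 2 := by gcongr

end Perturbation

lemma IsEigList.exists_orthonormalBasis_s16 {n : ℕ} {M : Matrix (Fin n) (Fin n) ℝ}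
    {hM : M.IsHermitian} {α : Fin n → ℝ} (h : IsEigList hM α) :
    ∃ e : OrthonormalBasis (Fin n) ℝ (EuclideanSpace ℝ (Fin n)),
      ∀ j, toEuclideanCLM (𝕜 := ℝ) M (e j) = α j • e j := by
  obtain ⟨-, σ, rfl⟩ := h
  refine ⟨hM.eigenvectorBasis.reindex σ.symm, fun j => ?_⟩
  ext k
  simpa using congrFun (hM.mulVec_eigenvectorBasis (σ j)) k

lemma EuclideanSpace.norm_toLp_eq_one {ι : Type*} [Fintype ι] {x : ι → ℝ}
    (hx : ∑ j, x j ^ 2 = 1) : ‖WithLp.toLp 2 x‖ = 1 := by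
  simp [EuclideanSpace.norm_eq, hx]

theorem davis_kahan {n : ℕ} (A B : Matrix (Fin n) (Fin n) ℝ) (c : ℝ)
    (hA : A.IsHermitian) (hB : B.IsHermitian) (hAB : opNorm (A - B) ≤ c)
    (α β : Fin n → ℝ) (a b : Fin n → Fin n → ℝ)
    (hα : IsEigList hA α) (hβ : IsEigList hB β)
    (ha : ∀ i, A.mulVec (a i) = α i • a i) (hanorm : ∀ i, ∑ j, a i j ^ 2 = 1)
    (hb : ∀ i, B.mulVec (b i) = β i • b i) (hbnorm : ∀ i, ∑ j, b i j ^ 2 = 1)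
    (i : Fin n) (gap : ℝ) (hgap : 0 < gap)
    (hgap1 : ∀ j : Fin n, (j : ℕ) + 1 = (i : ℕ) → gap ≤ |β j - α i|)
    (hgap2 : ∀ j : Fin n, (j : ℕ) = (i : ℕ) + 1 → gap ≤ |β j - α i|) :
    Real.sqrt (1 - (∑ j, a i j * b i j) ^ 2) ≤ c / gap := by
  obtain ⟨e, he⟩ := hα.exists_orthonormalBasis_s16
  obtain ⟨f, hf⟩ := hβ.exists_orthonormalBasis_s16
  have key := sqrt_one_sub_inner_sq_le_norm_sub_div hα.1 hβ.1 he hf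
    (EuclideanSpace.norm_toLp_eq_one (hanorm i)) (EuclideanSpace.norm_toLp_eq_one (hbnorm i))
    (by rw [toEuclideanCLM_toLp, ha i, WithLp.toLp_smul])
    (by rw [toEuclideanCLM_toLp, hb i, WithLp.toLp_smul]) hgap hgap1 hgap2
  rw [EuclideanSpace.inner_toLp_toLp, ← map_sub] at key
  calc Real.sqrt (1 - (∑ j, a i j * b i j) ^ 2)
      = Real.sqrt (1 - (b i ⬝ᵥ star (a i)) ^ 2) := by simp [dotProduct, mul_comm]
    _ ≤ opNorm (A - B) / gap := key
    _ ≤ c / gap := div_le_div_of_nonneg_right hAB hgap.le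
end
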